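/- arXiv:2307.11064 — 2 statements merged into one kernel-verified Lean document; each statement's English description precedes it below -/
import Mathlib

section
/- Let Φ be a regular root system in a finite-dimensional real vector space and let Γ be a group strongly graded by Φ with root subgroups {K_α}_{α∈Φ}. If Φ₁, Φ₂ ∈ Borel(Φ) are co-maximal, then ⟨K_{Φ₁∩Φ₂}, K_{−(Φ₁∩Φ₂)}⟩ = Γ. -/
/-!
Let `L` be the line spanned by `Φ₁ ∩ -Φ₂`. On a root off `L`, the functionals defining `Φ₁` and
`Φ₂` take values of the same sign (otherwise the root or its negative lies in `Φ₁ ∩ -Φ₂`), so the root lies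
in `±(Φ₁ ∩ Φ₂)`. A root `β` on `L` is, by regularity, a positive combination `a γ + b δ` of two
independent roots of an irreducible rank-two subsystem, neither proportional to `β`. A functional in
general position that is positive on `γ` and `δ` defines a Borel set `B` with `β` in its core: a
co-minimal partner of `B` containing `β` meets `B` only on `ℝ β`, so it is nonpositive on `γ` and
`δ`, hence on `β`. Strong grading puts `K_β` inside `K_{B ∖ ℝ_{>0} β}`, and `B ∖ ℝ_{>0} β` misses `L`.
-/

universe u v

variable {E : Type u} [AddCommGroup E] [Module ℝ E] [FiniteDimensional ℝ E]
variable {Γ : Type v} [Group Γ]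

def IsRootSystem (Φ : Set E) : Prop :=
  Φ.Finite ∧ Submodule.span ℝ Φ = ⊤ ∧ (0 : E) ∉ Φ ∧ ∀ α ∈ Φ, -α ∈ Φ

def IsGeneralPosition (Φ : Set E) (f : E →ₗ[ℝ] ℝ) : Prop :=
  (∀ α ∈ Φ, f α ≠ 0) ∧ ∀ α ∈ Φ, ∀ β ∈ Φ, α ≠ β → f α ≠ f β

def IsBorelSet (Φ B : Set E) : Prop :=
  ∃ f : E →ₗ[ℝ] ℝ, IsGeneralPosition Φ f ∧ B = {α ∈ Φ | 0 < f α}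

def CoMinimal (A B : Set E) : Prop :=
  Module.finrank ℝ ↥(Submodule.span ℝ (A ∩ B)) = 1

def CoMaximal (A B : Set E) : Prop := CoMinimal A (-B)

def KA (K : E → Subgroup Γ) (A : Set E) : Subgroup Γ := ⨆ α ∈ A, K α

open scoped commutatorElement in
def IsGraded (Φ : Set E) (K : E → Subgroup Γ) : Prop :=
  (⨆ α ∈ Φ, K α) = ⊤ ∧
  ∀ α ∈ Φ, ∀ β ∈ Φ, (¬ ∃ c : ℝ, c < 0 ∧ β = c • α) →
    ∀ g ∈ K α, ∀ h ∈ K β,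
      ⁅g, h⁆ ∈ KA K {γ ∈ Φ | ∃ a b : ℝ, 1 ≤ a ∧ 1 ≤ b ∧ γ = a • α + b • β}

def borelBoundary (Φ Φ₁ : Set E) : Set E :=
  {α ∈ Φ₁ | ∃ Φ₂, IsBorelSet Φ Φ₂ ∧ CoMinimal Φ₁ Φ₂ ∧ α ∈ Φ₁ ∩ Φ₂}

def borelCore (Φ Φ₁ : Set E) : Set E := Φ₁ \ borelBoundary Φ Φ₁

def IsStronglyGraded (Φ : Set E) (K : E → Subgroup Γ) : Prop :=
  IsGraded Φ K ∧
  ∀ Φ₁ : Set E, IsBorelSet Φ Φ₁ → ∀ β ∈ borelCore Φ Φ₁,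
    K β ≤ KA K (Φ₁ \ {x | ∃ c : ℝ, 0 < c ∧ x = c • β})

def IsIrreducibleRootSet (Ψ : Set E) : Prop :=
  ¬ ∃ A B : Set E, A.Nonempty ∧ B.Nonempty ∧ Disjoint A B ∧ A ∪ B = Ψ ∧
    Submodule.span ℝ A ⊓ Submodule.span ℝ B = ⊥

def IsRootSubsystem (Φ Ψ : Set E) : Prop :=
  Ψ.Nonempty ∧ Ψ ⊆ Φ ∧ Φ ∩ (Submodule.span ℝ Ψ : Set E) = Ψ

def IsRegularRootSystem (Φ : Set E) : Prop :=
  ∀ α ∈ Φ, ∃ Ψ : Set E, IsRootSubsystem Φ Ψ ∧ IsIrreducibleRootSet Ψ ∧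
    Module.finrank ℝ ↥(Submodule.span ℝ Ψ) = 2 ∧ α ∈ Ψ

open Filter Topology Submodule

section

variable {V : Type*} [AddCommGroup V] [Module ℝ V]

lemma tendsto_const_add_mul_nhds_zero (a b : ℝ) :
    Tendsto (fun t : ℝ => a + t * b) (𝓝 0) (𝓝 a) := by
  simpa using (tendsto_const_nhds (x := a)).add ((tendsto_id (x := 𝓝 (0 : ℝ))).mul_const b)

lemma eventually_add_mul_ne_zero (a : ℝ) {b : ℝ} (hb : b ≠ 0) :
    ∀ᶠ t in 𝓝[≠] (0 : ℝ), a + t * b ≠ 0 := by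
  rcases eq_or_ne a 0 with rfl | ha
  · filter_upwards [self_mem_nhdsWithin] with t ht
    simpa using And.intro ht hb
  · exact nhdsWithin_le_nhds ((tendsto_const_add_mul_nhds_zero a b).eventually_ne ha)

open Pointwise in
lemma exists_isGeneralPosition_forall_pos {Φ S : Set V} (hΦ : Φ.Finite) (h0 : (0 : V) ∉ Φ)
    (hS : S.Finite) {f₀ : V →ₗ[ℝ] ℝ} (hf₀ : ∀ s ∈ S, 0 < f₀ s) :
    ∃ f : V →ₗ[ℝ] ℝ, IsGeneralPosition Φ f ∧ ∀ s ∈ S, 0 < f s := by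
  -- `f = f₀ + t • g` for small `t ≠ 0`, where `g` vanishes neither on roots nor on differences
  -- of distinct roots
  set D : Set V := Φ ∪ (Φ - Φ) \ {0}
  have hD : D.Finite := hΦ.union ((hΦ.sub hΦ).sdiff)
  have : Finite D := hD.to_subtype
  obtain ⟨g, hg⟩ := Module.exists_dual_forall_apply_ne_zero (K := ℝ) (fun v : D => (v : V)) <| by
    rintro ⟨v, hv | ⟨-, hv⟩⟩ rfl
    exacts [h0 hv, hv rfl]
  have hne : ∀ᶠ t in 𝓝[≠] (0 : ℝ), ∀ v ∈ D, f₀ v + t * g v ≠ 0 :=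
    hD.eventually_all.2 fun v hv => eventually_add_mul_ne_zero (f₀ v) (hg ⟨v, hv⟩)
  have hpos : ∀ᶠ t in 𝓝[≠] (0 : ℝ), ∀ s ∈ S, 0 < f₀ s + t * g s :=
    nhdsWithin_le_nhds <| hS.eventually_all.2 fun s hs =>
      (tendsto_const_add_mul_nhds_zero (f₀ s) (g s)).eventually_const_lt (hf₀ s hs)
  obtain ⟨t, hne, hpos⟩ := (hne.and hpos).exists
  refine ⟨f₀ + t • g, ⟨fun α hα => hne α (.inl hα), fun α hα β hβ hαβ h => ?_⟩, hpos⟩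
  refine hne (α - β) (.inr ⟨Set.sub_mem_sub hα hβ, sub_ne_zero.2 hαβ⟩) ?_
  simpa [sub_eq_zero, mul_sub, ← add_sub_add_comm] using h

lemma mem_span_singleton_of_smul_eq {x y : V} {b : ℝ} (h : b • y = x) (hx : x ≠ 0) :
    y ∈ span ℝ {x} := by
  have hb : b ≠ 0 := by rintro rfl; exact hx (by simp [← h])
  exact (smul_mem_iff _ hb).1 (by rw [h]; exact mem_span_singleton_self x)

lemma LinearIndependent.pair_smul {x y : V} (h : LinearIndependent ℝ ![x, y]) {a b : ℝ}
    (ha : a ≠ 0) (hb : b ≠ 0) : LinearIndependent ℝ ![a • x, b • y] := by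
  rw [LinearIndependent.pair_iff] at h ⊢
  intro s t hst
  obtain ⟨hs, ht⟩ := h (s * a) (t * b) (by simpa [mul_smul] using hst)
  exact ⟨by simpa [ha] using hs, by simpa [hb] using ht⟩

lemma span_singleton_eq_of_finrank_eq_one {L : Submodule ℝ V} (hL : Module.finrank ℝ L = 1)
    {x : V} (hx : x ∈ L) (hx0 : x ≠ 0) : span ℝ {x} = L := by
  have : FiniteDimensional ℝ L := .of_finrank_pos (by omega)
  exact eq_of_le_of_finrank_le ((span_singleton_le_iff_mem _ _).2 hx)
    (by rw [hL, finrank_span_singleton hx0])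

lemma exists_mem_notMem_span_singleton {Ψ : Set V} (hrk : Module.finrank ℝ (span ℝ Ψ) = 2)
    {β : V} (hβ : β ≠ 0) : ∃ γ ∈ Ψ, γ ∉ span ℝ {β} := by
  by_contra! h
  have := finrank_mono (span_le.2 h)
  rw [hrk, finrank_span_singleton hβ] at this
  omega

lemma mem_span_pair_of_finrank_eq_two {Ψ : Set V} (hrk : Module.finrank ℝ (span ℝ Ψ) = 2)
    {γ δ x : V} (hγ : γ ∈ Ψ) (hδ : δ ∈ Ψ) (hγδ : LinearIndependent ℝ ![γ, δ])
    (hx : x ∈ span ℝ Ψ) : x ∈ span ℝ {γ, δ} := by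
  have : FiniteDimensional ℝ (span ℝ Ψ) := .of_finrank_pos (by omega)
  have hpair := finrank_span_eq_card hγδ
  rw [Matrix.range_cons_cons_empty] at hpair
  have heq : span ℝ {γ, δ} = span ℝ Ψ := by
    refine eq_of_le_of_finrank_le (span_le.2 ?_) (by simp [hrk, hpair])
    rintro _ (rfl | rfl) <;> exact subset_span ‹_›
  exact heq ▸ hx

lemma IsIrreducibleRootSet.exists_mem_notMem_span_singleton_pair {Ψ : Set V}
    (hirr : IsIrreducibleRootSet Ψ) {β γ : V} (hβ : β ∈ Ψ) (hγ : γ ∈ Ψ)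
    (hγβ : γ ∉ span ℝ {β}) : ∃ δ ∈ Ψ, δ ∉ span ℝ {β} ∧ δ ∉ span ℝ {γ} := by
  by_contra! h
  refine hirr ⟨Ψ ∩ span ℝ {β}, Ψ \ span ℝ {β}, ⟨β, hβ, mem_span_singleton_self β⟩,
    ⟨γ, hγ, hγβ⟩, Set.disjoint_sdiff_inter.symm, Set.inter_union_sdiff _ _, ?_⟩
  have hγ0 : γ ≠ 0 := by rintro rfl; exact hγβ (zero_mem _)
  refine eq_bot_iff.2 ((inf_le_inf (span_le.2 Set.inter_subset_right)
    (span_le.2 fun δ hδ => h δ hδ.1 hδ.2)).trans ?_)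
  exact (disjoint_iff.1 ((disjoint_span_singleton' hγ0).2 hγβ)).le

lemma exists_pos_smul_eq_smul_mem {Ψ : Set V} (hneg : ∀ x ∈ Ψ, -x ∈ Ψ) {x : V} (hx : x ∈ Ψ)
    {a : ℝ} (ha : a ≠ 0) : ∃ ε : ℝ, ε ≠ 0 ∧ ε • x ∈ Ψ ∧ ∃ c : ℝ, 0 < c ∧ c • ε • x = a • x := by
  rcases ha.lt_or_gt with ha | ha
  · exact ⟨-1, by norm_num, by simpa using hneg x hx, -a, by linarith, by simp⟩
  · exact ⟨1, one_ne_zero, by simpa using hx, a, ha, by simp⟩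

lemma exists_eq_pos_smul_add_pos_smul {Ψ : Set V} (hneg : ∀ x ∈ Ψ, -x ∈ Ψ) (h0 : (0 : V) ∉ Ψ)
    (hirr : IsIrreducibleRootSet Ψ) (hrk : Module.finrank ℝ (span ℝ Ψ) = 2) {β : V}
    (hβ : β ∈ Ψ) :
    ∃ γ ∈ Ψ, ∃ δ ∈ Ψ, γ ∉ span ℝ {β} ∧ δ ∉ span ℝ {β} ∧ LinearIndependent ℝ ![γ, δ] ∧
      ∃ a b : ℝ, 0 < a ∧ 0 < b ∧ a • γ + b • δ = β := by
  have hβ0 : β ≠ 0 := ne_of_mem_of_not_mem hβ h0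
  obtain ⟨γ, hγ, hγβ⟩ := exists_mem_notMem_span_singleton hrk hβ0
  obtain ⟨δ, hδ, hδβ, hδγ⟩ := hirr.exists_mem_notMem_span_singleton_pair hβ hγ hγβ
  have hγδ : LinearIndependent ℝ ![γ, δ] :=
    (LinearIndependent.pair_iff' (ne_of_mem_of_not_mem hγ h0)).2 fun c h =>
      hδγ (h ▸ smul_mem _ c (mem_span_singleton_self γ))
  obtain ⟨a, b, hab⟩ :=
    mem_span_pair.1 (mem_span_pair_of_finrank_eq_two hrk hγ hδ hγδ (subset_span hβ))
  have ha : a ≠ 0 := by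
    rintro rfl
    exact hδβ (mem_span_singleton_of_smul_eq (by simpa using hab) hβ0)
  have hb : b ≠ 0 := by
    rintro rfl
    exact hγβ (mem_span_singleton_of_smul_eq (by simpa using hab) hβ0)
  obtain ⟨ε, hε, hεγ, a', ha', hγ'⟩ := exists_pos_smul_eq_smul_mem hneg hγ ha
  obtain ⟨η, hη, hηδ, b', hb', hδ'⟩ := exists_pos_smul_eq_smul_mem hneg hδ hb
  exact ⟨ε • γ, hεγ, η • δ, hηδ, fun h => hγβ ((smul_mem_iff _ hε).1 h),
    fun h => hδβ ((smul_mem_iff _ hη).1 h), hγδ.pair_smul hε hη, a', b', ha', hb',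
    by rw [hγ', hδ', hab]⟩

lemma IsRootSubsystem.neg_mem {Φ Ψ : Set V} (hΨ : IsRootSubsystem Φ Ψ)
    (hneg : ∀ α ∈ Φ, -α ∈ Φ) {x : V} (hx : x ∈ Ψ) : -x ∈ Ψ := by
  rw [← hΨ.2.2]
  exact ⟨hneg x (hΨ.2.1 hx), Submodule.neg_mem _ (subset_span hx)⟩

lemma IsBorelSet.subset {Φ B : Set V} (hB : IsBorelSet Φ B) : B ⊆ Φ := by
  obtain ⟨f, -, rfl⟩ := hB
  exact Set.sep_subset _ _

lemma IsBorelSet.mem_or_neg_mem {Φ B : Set V} (hneg : ∀ α ∈ Φ, -α ∈ Φ) (hB : IsBorelSet Φ B)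
    {α : V} (hα : α ∈ Φ) : α ∈ B ∨ -α ∈ B := by
  obtain ⟨f, hf, rfl⟩ := hB
  rcases (hf.1 α hα).lt_or_gt with h | h
  · exact .inr ⟨hneg α hα, by simpa using h⟩
  · exact .inl ⟨hα, h⟩

lemma IsBorelSet.exists_pos_smul_eq {Φ B : Set V} (hB : IsBorelSet Φ B) {α x : V} (hα : α ∈ B)
    (hx : x ∈ B) (hxα : x ∈ span ℝ {α}) : ∃ c : ℝ, 0 < c ∧ x = c • α := by
  obtain ⟨f, -, rfl⟩ := hB
  obtain ⟨c, rfl⟩ := mem_span_singleton.1 hxα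
  exact ⟨c, pos_of_mul_pos_left (by simpa using hx.2) hα.2.le, rfl⟩

lemma mem_borelCore_of_pos_combination {Φ B : Set V} (hBΦ : B ⊆ Φ) {β γ δ : V} {a b : ℝ}
    (hβ : β ∈ B) (hγ : γ ∈ B) (hδ : δ ∈ B) (hγβ : γ ∉ span ℝ {β}) (hδβ : δ ∉ span ℝ {β})
    (ha : 0 ≤ a) (hb : 0 ≤ b) (hab : a • γ + b • δ = β) : β ∈ borelCore Φ B := by
  refine ⟨hβ, ?_⟩
  rintro ⟨-, -, ⟨g, -, rfl⟩, hcm, hβ₂⟩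
  have hgβ : 0 < g β := hβ₂.2.2
  have hsub : B ∩ {α ∈ Φ | 0 < g α} ⊆ span ℝ {β} := by
    rw [span_singleton_eq_of_finrank_eq_one hcm (subset_span hβ₂) (by rintro rfl; simp at hgβ)]
    exact subset_span
  have hgγ : g γ ≤ 0 := not_lt.1 fun h => hγβ (hsub ⟨hγ, hBΦ hγ, h⟩)
  have hgδ : g δ ≤ 0 := not_lt.1 fun h => hδβ (hsub ⟨hδ, hBΦ hδ, h⟩)
  rw [← hab, map_add, map_smul, map_smul, smul_eq_mul, smul_eq_mul] at hgβ
  linarith [mul_nonpos_of_nonneg_of_nonpos ha hgγ, mul_nonpos_of_nonneg_of_nonpos hb hgδ]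

lemma exists_isBorelSet_mem_borelCore {Φ : Set V} (hΦ : IsRootSystem Φ)
    (hreg : IsRegularRootSystem Φ) {β : V} (hβ : β ∈ Φ) :
    ∃ B, IsBorelSet Φ B ∧ β ∈ borelCore Φ B := by
  obtain ⟨hfin, -, h0, hneg⟩ := hΦ
  obtain ⟨Ψ, hΨ, hirr, hrk, hβΨ⟩ := hreg β hβ
  obtain ⟨γ, hγ, δ, hδ, hγβ, hδβ, hγδ, a, b, ha, hb, hab⟩ := exists_eq_pos_smul_add_pos_smul
    (fun _ => hΨ.neg_mem hneg) (fun h => h0 (hΨ.2.1 h)) hirr hrk hβΨ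
  obtain ⟨f₀, hf₀⟩ := Module.exists_dual_forall_apply_eq_one (hγδ.linearIndepOn Set.univ)
  have hf₀γ : f₀ γ = 1 := hf₀ 0 trivial
  have hf₀δ : f₀ δ = 1 := hf₀ 1 trivial
  obtain ⟨f, hf, hfpos⟩ := exists_isGeneralPosition_forall_pos hfin h0 (Set.toFinite {γ, δ})
    (f₀ := f₀) (by rintro _ (rfl | rfl) <;> simp [hf₀γ, hf₀δ])
  have hfγ := hfpos γ (by simp)
  have hfδ := hfpos δ (by simp)
  have hfβ : 0 < f β := by
    rw [← hab, map_add, map_smul, map_smul, smul_eq_mul, smul_eq_mul]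
    positivity
  exact ⟨_, ⟨f, hf, rfl⟩, mem_borelCore_of_pos_combination (Set.sep_subset _ _) ⟨hβ, hfβ⟩
    ⟨hΨ.2.1 hγ, hfγ⟩ ⟨hΨ.2.1 hδ, hfδ⟩ hγβ hδβ ha.le hb.le hab⟩

lemma mem_inter_union_neg_of_notMem_span {Φ Φ₁ Φ₂ : Set V} (hneg : ∀ α ∈ Φ, -α ∈ Φ)
    (h₁ : IsBorelSet Φ Φ₁) (h₂ : IsBorelSet Φ Φ₂) {α : V} (hα : α ∈ Φ)
    (hαL : α ∉ span ℝ (Φ₁ ∩ -Φ₂)) : α ∈ (Φ₁ ∩ Φ₂) ∪ -(Φ₁ ∩ Φ₂) := by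
  rcases h₁.mem_or_neg_mem hneg hα with hα₁ | hα₁ <;>
    rcases h₂.mem_or_neg_mem hneg hα with hα₂ | hα₂
  · exact .inl ⟨hα₁, hα₂⟩
  · exact absurd (subset_span (s := Φ₁ ∩ -Φ₂) ⟨hα₁, Set.mem_neg.2 hα₂⟩) hαL
  · refine absurd (neg_mem_iff.1 (subset_span (s := Φ₁ ∩ -Φ₂) ⟨hα₁, ?_⟩)) hαL
    rwa [Set.mem_neg, neg_neg]
  · exact .inr ⟨hα₁, hα₂⟩

end

/-- Let `Φ` be a regular root system and `Γ` a group strongly graded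
by `Φ` with root subgroups `{K_α}`.  If `Φ₁, Φ₂ ∈ Borel(Φ)` are co-maximal, then
`⟨K_{Φ₁∩Φ₂}, K_{−(Φ₁∩Φ₂)}⟩ = Γ`. -/
theorem comaximal_intersection_generates
    (Φ : Set E) (hΦ : IsRootSystem Φ) (hreg : IsRegularRootSystem Φ)
    (K : E → Subgroup Γ) (hgr : IsStronglyGraded Φ K)
    (Φ₁ Φ₂ : Set E) (h₁ : IsBorelSet Φ Φ₁) (h₂ : IsBorelSet Φ Φ₂)
    (hcm : CoMaximal Φ₁ Φ₂) :
    KA K (Φ₁ ∩ Φ₂) ⊔ KA K (-(Φ₁ ∩ Φ₂)) = ⊤ := by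
  have hgen : ∀ x ∈ Φ, x ∉ span ℝ (Φ₁ ∩ -Φ₂) →
      K x ≤ KA K (Φ₁ ∩ Φ₂) ⊔ KA K (-(Φ₁ ∩ Φ₂)) := fun x hx hxL =>
    (mem_inter_union_neg_of_notMem_span hΦ.2.2.2 h₁ h₂ hx hxL).elim
      (fun h => le_sup_of_le_left (le_biSup K h)) (fun h => le_sup_of_le_right (le_biSup K h))
  rw [eq_top_iff, ← hgr.1.1]
  refine iSup₂_le fun α hα => ?_
  by_cases hαL : α ∈ span ℝ (Φ₁ ∩ -Φ₂)
  · obtain ⟨B, hB, hcore⟩ := exists_isBorelSet_mem_borelCore hΦ hreg hα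
    have hLα := span_singleton_eq_of_finrank_eq_one hcm hαL (ne_of_mem_of_not_mem hα hΦ.2.2.1)
    refine (hgr.2 B hB α hcore).trans (iSup₂_le fun x hx => hgen x (hB.subset hx.1) fun hxL => ?_)
    exact hx.2 (hB.exists_pos_smul_eq hcore.1 hx.1 (hLα ▸ hxL))
  · exact hgen α hα hαL
end

section
/- Let Φ be a root system in a finite-dimensional real vector space and let Γ be a group graded by Φ with root subgroups {K_α}_{α∈Φ}. For every Borel set Φ₁ ∈ Borel(Φ), the subgroup K_{Φ₁} is boundedly generated by the subgroups K_α, α ∈ Φ₁: there is an ordering α₁, ..., α_n of the elements of Φ₁ such that K_{Φ₁} ⊆ K_{α₁}·K_{α₂}·…·K_{α_n}; in particular every element of K_{Φ₁} is a product of at most |Φ₁| elements of ⋃_{α∈Φ₁} K_α. -/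
/-!
Let `Φ₁ = {α ∈ Φ | 0 < f α}` and write `K_{f > t} = ⟨K_γ : γ ∈ Φ, t < f γ⟩`. For `t ≥ 0` and a
root `β` with `f β ≥ 0`, the grading sends `[K_β, K_γ]` with `t < f γ` into root subgroups of
roots `a • β + b • γ` (`a, b ≥ 1`), whose value exceeds `f γ`; so `K_β` normalizes `K_{f > t}`.
If `β` is the root of least value above `t` (unique by general position), then
`K_{f > t} = K_β ⊔ K_{f > f β} = K_β · K_{f > f β}`, and induction on the number of roots above
`t`, starting from `t = 0`, gives `K_{Φ₁} = K_{β₁} ⋯ K_{β_n}` with `f β₁ < ⋯ < f β_n`.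
-/

universe u v

variable {E : Type u} [AddCommGroup E] [Module ℝ E] [FiniteDimensional ℝ E]
variable {Γ : Type v} [Group Γ]

open Pointwise

theorem Set.sep_lt_eq_insert_of_forall_le {V : Type*} {Φ : Set V} {f : V → ℝ}
    (hinj : Set.InjOn f Φ) {t : ℝ} {β : V} (hβ : β ∈ {γ ∈ Φ | t < f γ})
    (hmin : ∀ γ ∈ {γ ∈ Φ | t < f γ}, f β ≤ f γ) :
    {γ ∈ Φ | t < f γ} = insert β {γ ∈ Φ | f β < f γ} := by
  ext γ
  constructor
  · intro hγ
    rcases (hmin γ hγ).eq_or_lt with h | h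
    · exact Or.inl (hinj hγ.1 hβ.1 h.symm)
    · exact Or.inr ⟨hγ.1, h⟩
  · rintro (rfl | ⟨hγ, h⟩)
    · exact hβ
    · exact ⟨hγ, hβ.2.trans h⟩

theorem Set.mem_list_prod_map_iff_ofFn {ι G : Type*} [Monoid G] (s : ι → Set G) (l : List ι)
    {g : G} :
    g ∈ (l.map s).prod ↔
      ∃ k : Fin l.length → G, (∀ i, k i ∈ s (l.get i)) ∧ g = (List.ofFn k).prod := by
  conv_lhs => rw [← List.ofFn_get l, List.map_ofFn, Set.mem_prod_list_ofFn]
  constructor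
  · rintro ⟨k, hk⟩
    exact ⟨fun i => k i, fun i => (k i).2, hk.symm⟩
  · rintro ⟨k, hk, rfl⟩
    exact ⟨fun i => ⟨k i, hk i⟩, rfl⟩

section Grading

variable {V : Type*} {Γ : Type*} [Group Γ]

theorem KA_eq_closure (K : V → Subgroup Γ) (A : Set V) :
    KA K A = Subgroup.closure (⋃ α ∈ A, (K α : Set Γ)) := by
  simp [KA, Subgroup.closure_iUnion, Subgroup.closure_eq]

theorem KA_mono (K : V → Subgroup Γ) {A B : Set V} (h : A ⊆ B) : KA K A ≤ KA K B :=
  biSup_mono h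

theorem le_KA (K : V → Subgroup Γ) {A : Set V} {α : V} (h : α ∈ A) : K α ≤ KA K A :=
  le_biSup K h

theorem KA_insert (K : V → Subgroup Γ) (β : V) (A : Set V) :
    KA K (insert β A) = K β ⊔ KA K A :=
  iSup_insert

theorem KA_empty (K : V → Subgroup Γ) : KA K ∅ = ⊥ := by
  simp [KA]

variable [AddCommGroup V] [Module ℝ V]

theorem IsGeneralPosition.injOn {Φ : Set V} {f : V →ₗ[ℝ] ℝ} (hf : IsGeneralPosition Φ f) :
    Set.InjOn f Φ :=
  fun α hα β hβ h => by_contra fun hne => hf.2 α hα β hβ hne h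

variable {Φ : Set V} {K : V → Subgroup Γ}

open scoped commutatorElement in
theorem IsGraded.le_normalizer_KA_superlevel (hgr : IsGraded Φ K) (f : V →ₗ[ℝ] ℝ) {β : V}
    (hβ : β ∈ Φ) (hfβ : 0 ≤ f β) {t : ℝ} (ht : 0 ≤ t) :
    K β ≤ Subgroup.normalizer (KA K {γ ∈ Φ | t < f γ}) := by
  rw [KA_eq_closure, Subgroup.le_normalizer_closure_iff, ← KA_eq_closure]
  intro x hx y hy
  simp only [Set.mem_iUnion, SetLike.mem_coe] at hy
  obtain ⟨γ, ⟨hγ, hfγ⟩, hy⟩ := hy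
  have not_neg_multiple : ¬ ∃ c : ℝ, c < 0 ∧ γ = c • β := by
    rintro ⟨c, hc, rfl⟩
    simp only [map_smul, smul_eq_mul] at hfγ
    nlinarith
  have commutator_roots_above :
      {δ ∈ Φ | ∃ a b : ℝ, 1 ≤ a ∧ 1 ≤ b ∧ δ = a • β + b • γ} ⊆ {γ ∈ Φ | t < f γ} := by
    rintro _ ⟨hδ, a, b, ha, hb, rfl⟩
    refine ⟨hδ, ?_⟩
    simp only [map_add, map_smul, smul_eq_mul]
    nlinarith
  have hcomm : ⁅x, y⁆ ∈ KA K {γ ∈ Φ | t < f γ} :=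
    KA_mono K commutator_roots_above (hgr.2 β hβ γ hγ not_neg_multiple x hx y hy)
  rw [show x * y * x⁻¹ = ⁅x, y⁆ * y by group]
  exact mul_mem hcomm (le_KA K (show γ ∈ {γ ∈ Φ | t < f γ} from ⟨hγ, hfγ⟩) hy)

theorem IsGraded.exists_list_KA_superlevel_subset_prod (hgr : IsGraded Φ K) (hfin : Φ.Finite)
    {f : V →ₗ[ℝ] ℝ} (hinj : Set.InjOn f Φ) (t : ℝ) (ht : 0 ≤ t) :
    ∃ l : List V, l.Nodup ∧ (∀ γ, γ ∈ l ↔ γ ∈ {γ ∈ Φ | t < f γ}) ∧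
      (KA K {γ ∈ Φ | t < f γ} : Set Γ) ⊆ (l.map fun γ => (K γ : Set Γ)).prod := by
  induction hn : {γ ∈ Φ | t < f γ}.ncard using Nat.strong_induction_on generalizing t with
  | _ n ih =>
  rcases Set.eq_empty_or_nonempty {γ ∈ Φ | t < f γ} with hempty | hne
  · refine ⟨[], List.nodup_nil, by simp [hempty], ?_⟩
    rw [hempty, KA_empty]
    simp
  obtain ⟨β, hβ, hmin⟩ := Set.exists_min_image _ f (hfin.subset (Set.sep_subset _ _)) hne
  have hsplit := Set.sep_lt_eq_insert_of_forall_le hinj hβ hmin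
  have hβ_notMem : β ∉ {γ ∈ Φ | f β < f γ} := fun h => lt_irrefl _ h.2
  have hcard : {γ ∈ Φ | f β < f γ}.ncard < n := by
    rw [← hn, hsplit]
    exact Set.ncard_lt_ncard (Set.ssubset_insert hβ_notMem)
      ((hfin.subset (Set.sep_subset _ _)).insert β)
  have hfβ : 0 ≤ f β := ht.trans hβ.2.le
  obtain ⟨l, hnd, hmem, hsub⟩ := ih _ hcard (f β) hfβ rfl
  refine ⟨β :: l, List.nodup_cons.mpr ⟨fun h => hβ_notMem ((hmem β).1 h), hnd⟩, ?_, ?_⟩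
  · intro γ
    rw [hsplit, List.mem_cons, hmem, Set.mem_insert_iff]
  · rw [hsplit, KA_insert, Subgroup.coe_mul_of_left_le_normalizer_right _ _
      (hgr.le_normalizer_KA_superlevel f hβ.1 hfβ hfβ), List.map_cons, List.prod_cons]
    exact Set.mul_subset_mul_left hsub

end Grading

/-- Let `Φ` be a root system and `Γ` a group graded by `Φ` with root
subgroups `{K_α}`.  For every Borel set `Φ₁` of `Φ`, the subgroup `K_{Φ₁}` is boundedly
generated by the `K_α`, `α ∈ Φ₁`: there is an enumeration `α₁, …, α_n` of the elements
of `Φ₁` such that `K_{Φ₁} ⊆ K_{α₁}·K_{α₂}·…·K_{α_n}`; in particular every element of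
`K_{Φ₁}` is a product of at most `|Φ₁|` elements of `⋃_{α ∈ Φ₁} K_α`. -/
theorem borel_subgroup_boundedly_generated
    (Φ : Set E) (hΦ : IsRootSystem Φ) (K : E → Subgroup Γ) (hgr : IsGraded Φ K)
    (Φ₁ : Set E) (h₁ : IsBorelSet Φ Φ₁) :
    ∃ (n : ℕ) (α : Fin n → E), Function.Injective α ∧ (∀ i, α i ∈ Φ₁) ∧
      (∀ β ∈ Φ₁, ∃ i, α i = β) ∧
      ∀ g ∈ KA K Φ₁, ∃ k : Fin n → Γ, (∀ i, k i ∈ K (α i)) ∧ g = (List.ofFn k).prod := by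
  obtain ⟨f, hgp, rfl⟩ := h₁
  obtain ⟨l, hnd, hmem, hsub⟩ :=
    hgr.exists_list_KA_superlevel_subset_prod hΦ.1 hgp.injOn 0 le_rfl
  refine ⟨l.length, l.get, List.nodup_iff_injective_get.mp hnd,
    fun i => (hmem _).1 (l.get_mem i), fun β hβ => List.mem_iff_get.mp ((hmem β).2 hβ),
    fun g hg => (Set.mem_list_prod_map_iff_ofFn _ l).1 (hsub hg)⟩
end
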